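/- The map G ↦ φ ∗ G, where (φ ∗ G)(x,y) = ∫_{ℝⁿ} φ(z) G(x−z,y−z) dz for a fixed Schwartz function φ on ℝⁿ, is continuous from 𝒮_od(ℝ²ⁿ) to itself with respect to the Fréchet topology induced by the Schwartz seminorms. -/

import Mathlib

/-!
Convolving along a linear map, `x ↦ ∫ φ z • g (x - L z) dμ(z)`, commutes with differentiation,
since differentiating under the integral only hits `g`. Peetre's inequality
`1 + ‖x‖ ≤ (1 + ‖x - L z‖) (1 + ‖L‖) (1 + ‖z‖)` then bounds every Schwartz seminorm of the
convolution by finitely many seminorms of `g`, times a moment of `φ`, which is finite. So the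
convolution is a continuous linear map on the whole Schwartz space; the paper's `φ ∗ G` is the
case `L z = (z, z)`, and continuity passes to the off-diagonal subspace with its induced topology.
-/

open MeasureTheory SchwartzMap

noncomputable abbrev Euc (n : ℕ) : Type := EuclideanSpace ℝ (Fin n)

/-- `G` is an off-diagonal Schwartz function: antisymmetric and all derivatives
vanish on the diagonal. -/
def IsOffDiag {n : ℕ} (G : SchwartzMap (Euc n × Euc n) ℝ) : Prop :=
  (∀ x y : Euc n, G (x, y) = - G (y, x)) ∧
  (∀ (k : ℕ) (z : Euc n), iteratedFDeriv ℝ k (⇑G) (z, z) = 0)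

open scoped ContDiff

theorem one_add_norm_le_mul_one_add_norm_sub {F : Type*} [SeminormedAddCommGroup F] (x y : F) :
    1 + ‖x‖ ≤ (1 + ‖x - y‖) * (1 + ‖y‖) := by
  nlinarith [norm_le_norm_add_norm_sub' x y, mul_nonneg (norm_nonneg (x - y)) (norm_nonneg y)]

theorem ContinuousLinearMap.one_add_norm_apply_le {E F : Type*} [SeminormedAddCommGroup E]
    [NormedSpace ℝ E] [SeminormedAddCommGroup F] [NormedSpace ℝ F] (L : E →L[ℝ] F) (z : E) :
    1 + ‖L z‖ ≤ (1 + ‖L‖) * (1 + ‖z‖) := by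
  nlinarith [L.le_opNorm z, norm_nonneg L, norm_nonneg z]

namespace SchwartzMap

theorem integrable_one_add_norm_pow_mul {E V : Type*} [NormedAddCommGroup E] [NormedSpace ℝ E]
    [MeasurableSpace E] [BorelSpace E] [SecondCountableTopology E] [NormedAddCommGroup V]
    [NormedSpace ℝ V] (μ : Measure E) [μ.HasTemperateGrowth] (f : 𝓢(E, V)) (k : ℕ) :
    Integrable (fun z => (1 + ‖z‖) ^ k * ‖f z‖) μ := by
  refine ((f.integrable.norm.add (f.integrable_pow_mul μ k)).const_mul (2 ^ (k - 1))).mono'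
    (by fun_prop) (.of_forall fun z => ?_)
  have h := add_pow_le zero_le_one (norm_nonneg z) k
  rw [one_pow] at h
  rw [norm_mul, norm_pow, Real.norm_of_nonneg (by positivity), norm_norm]
  calc (1 + ‖z‖) ^ k * ‖f z‖ ≤ 2 ^ (k - 1) * (1 + ‖z‖ ^ k) * ‖f z‖ :=
        mul_le_mul_of_nonneg_right h (norm_nonneg _)
    _ = 2 ^ (k - 1) * (‖f z‖ + ‖z‖ ^ k * ‖f z‖) := by ring

universe u

-- `F` and `W` share a universe so that inductions on the derivative order can replace `W`
-- by `F →L[ℝ] W`.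
variable {E : Type*} {F W : Type u}
  [NormedAddCommGroup E] [NormedSpace ℝ E]
  [NormedAddCommGroup F] [NormedSpace ℝ F] [NormedAddCommGroup W] [NormedSpace ℝ W]
  (φ : 𝓢(E, ℝ)) (L : E →L[ℝ] F)

theorem norm_smul_apply_sub_le (g : 𝓢(F, W)) (x : F) (z : E) :
    ‖φ z • g (x - L z)‖ ≤ ‖φ z‖ * SchwartzMap.seminorm ℝ 0 0 g := by
  rw [norm_smul]
  gcongr
  exact norm_le_seminorm ℝ g _

theorem one_add_norm_pow_mul_norm_iteratedFDeriv_le (k m : ℕ) (g : 𝓢(F, W)) (x : F) (z : E) :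
    (1 + ‖x‖) ^ k * ‖iteratedFDeriv ℝ m g (x - L z)‖ ≤
      (1 + ‖L‖) ^ k * (1 + ‖z‖) ^ k *
        (2 ^ k * (Finset.Iic (k, m)).sup (schwartzSeminormFamily ℝ F W) g) := by
  have hpeetre : 1 + ‖x‖ ≤ (1 + ‖x - L z‖) * ((1 + ‖L‖) * (1 + ‖z‖)) :=
    (one_add_norm_le_mul_one_add_norm_sub x (L z)).trans
      (by gcongr; exact L.one_add_norm_apply_le z)
  calc (1 + ‖x‖) ^ k * ‖iteratedFDeriv ℝ m g (x - L z)‖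
      ≤ ((1 + ‖x - L z‖) * ((1 + ‖L‖) * (1 + ‖z‖))) ^ k * ‖iteratedFDeriv ℝ m g (x - L z)‖ := by
        gcongr
    _ = (1 + ‖L‖) ^ k * (1 + ‖z‖) ^ k *
          ((1 + ‖x - L z‖) ^ k * ‖iteratedFDeriv ℝ m g (x - L z)‖) := by
        rw [mul_pow, mul_pow]
        ring
    _ ≤ _ := mul_le_mul_of_nonneg_left
        (one_add_le_sup_seminorm_apply (𝕜 := ℝ) (m := (k, m)) le_rfl le_rfl g _) (by positivity)

variable [MeasurableSpace E] (μ : Measure E)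

noncomputable def convAlong (g : 𝓢(F, W)) (x : F) : W :=
  ∫ z, φ z • g (x - L z) ∂μ

variable [BorelSpace E] [SecondCountableTopology E] [μ.HasTemperateGrowth]

theorem integrable_smul_apply_sub (g : 𝓢(F, W)) (x : F) :
    Integrable (fun z => φ z • g (x - L z)) μ :=
  (φ.integrable.norm.mul_const _).mono'
    (φ.continuous.smul (g.continuous.comp (continuous_const.sub L.continuous))).aestronglyMeasurable
    (.of_forall (norm_smul_apply_sub_le φ L g x))

theorem hasFDerivAt_convAlong (g : 𝓢(F, W)) (x₀ : F) :
    HasFDerivAt (convAlong φ L μ g) (convAlong φ L μ (fderivCLM ℝ F W g) x₀) x₀ := by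
  have hderiv (z : E) (x : F) :
      HasFDerivAt (fun x => φ z • g (x - L z)) (φ z • fderiv ℝ g (x - L z)) x :=
    (g.differentiableAt.hasFDerivAt.comp x (hasFDerivAt_sub_const (L z))).const_smul (φ z)
  exact hasFDerivAt_integral_of_dominated_of_fderiv_le Filter.univ_mem
    (.of_forall fun x => (integrable_smul_apply_sub φ L μ g x).aestronglyMeasurable)
    (integrable_smul_apply_sub φ L μ g x₀)
    (integrable_smul_apply_sub φ L μ (fderivCLM ℝ F W g) x₀).aestronglyMeasurable
    (.of_forall fun z x _ => norm_smul_apply_sub_le φ L (fderivCLM ℝ F W g) x z)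
    (φ.integrable.norm.mul_const _) (.of_forall fun z x _ => hderiv z x)

theorem fderiv_convAlong (g : 𝓢(F, W)) :
    fderiv ℝ (convAlong φ L μ g) = convAlong φ L μ (fderivCLM ℝ F W g) :=
  funext fun x => (hasFDerivAt_convAlong φ L μ g x).fderiv

theorem differentiable_convAlong (g : 𝓢(F, W)) : Differentiable ℝ (convAlong φ L μ g) :=
  fun x => (hasFDerivAt_convAlong φ L μ g x).differentiableAt

theorem contDiff_convAlong (g : 𝓢(F, W)) : ContDiff ℝ ∞ (convAlong φ L μ g) := by
  refine contDiff_infty.2 fun m => ?_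
  induction m generalizing W with
  | zero => exact contDiff_zero.2 (differentiable_convAlong φ L μ g).continuous
  | succ m ih =>
    push_cast
    refine contDiff_succ_iff_fderiv.2 ⟨differentiable_convAlong φ L μ g, by simp, ?_⟩
    rw [fderiv_convAlong]
    exact ih _

theorem norm_iteratedFDeriv_convAlong_le (m : ℕ) (g : 𝓢(F, W)) (x : F) :
    ‖iteratedFDeriv ℝ m (convAlong φ L μ g) x‖ ≤
      ∫ z, ‖φ z‖ * ‖iteratedFDeriv ℝ m g (x - L z)‖ ∂μ := by
  induction m generalizing W with
  | zero =>
    simpa only [convAlong, norm_iteratedFDeriv_zero, norm_smul] using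
      norm_integral_le_integral_norm (μ := μ) fun z => φ z • g (x - L z)
  | succ m ih =>
    have hcoe : ⇑(fderivCLM ℝ F W g) = fderiv ℝ g := rfl
    rw [← norm_iteratedFDeriv_fderiv, fderiv_convAlong]
    simpa only [hcoe, norm_iteratedFDeriv_fderiv] using ih (fderivCLM ℝ F W g)

theorem pow_mul_norm_iteratedFDeriv_convAlong_le (k m : ℕ) (g : 𝓢(F, W)) (x : F) :
    ‖x‖ ^ k * ‖iteratedFDeriv ℝ m (convAlong φ L μ g) x‖ ≤
      ((1 + ‖L‖) ^ k * 2 ^ k * ∫ z, (1 + ‖z‖) ^ k * ‖φ z‖ ∂μ) *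
        (Finset.Iic (k, m)).sup (schwartzSeminormFamily ℝ F W) g := by
  set S := (Finset.Iic (k, m)).sup (schwartzSeminormFamily ℝ F W) g
  calc ‖x‖ ^ k * ‖iteratedFDeriv ℝ m (convAlong φ L μ g) x‖
      ≤ (1 + ‖x‖) ^ k * ∫ z, ‖φ z‖ * ‖iteratedFDeriv ℝ m g (x - L z)‖ ∂μ := by
        gcongr
        · linarith
        · exact norm_iteratedFDeriv_convAlong_le φ L μ m g x
    _ = ∫ z, ‖φ z‖ * ((1 + ‖x‖) ^ k * ‖iteratedFDeriv ℝ m g (x - L z)‖) ∂μ := by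
        rw [← integral_const_mul]
        congr 1 with z
        ring
    _ ≤ ∫ z, (1 + ‖L‖) ^ k * 2 ^ k * S * ((1 + ‖z‖) ^ k * ‖φ z‖) ∂μ := by
        refine integral_mono_of_nonneg (.of_forall fun z => by positivity)
          ((integrable_one_add_norm_pow_mul μ φ k).const_mul _) (.of_forall fun z => ?_)
        calc ‖φ z‖ * ((1 + ‖x‖) ^ k * ‖iteratedFDeriv ℝ m g (x - L z)‖)
            ≤ ‖φ z‖ * ((1 + ‖L‖) ^ k * (1 + ‖z‖) ^ k * (2 ^ k * S)) :=
              mul_le_mul_of_nonneg_left (one_add_norm_pow_mul_norm_iteratedFDeriv_le L k m g x z)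
                (norm_nonneg _)
          _ = _ := by ring
    _ = _ := by rw [integral_const_mul]; ring

noncomputable def convAlongCLM : 𝓢(F, W) →L[ℝ] 𝓢(F, W) :=
  mkCLM (convAlong φ L μ)
    (fun f g x => by
      simp only [convAlong, add_apply, smul_add]
      exact integral_add (integrable_smul_apply_sub φ L μ f x)
        (integrable_smul_apply_sub φ L μ g x))
    (fun a f x => by
      simp only [convAlong, smul_apply, RingHom.id_apply, ← integral_smul, smul_comm a])
    (contDiff_convAlong φ L μ)
    (fun ⟨k, m⟩ => ⟨_, _, by positivity, pow_mul_norm_iteratedFDeriv_convAlong_le φ L μ k m⟩)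

end SchwartzMap

/-- The convolution map `G ↦ φ ∗ G` is continuous on the subspace
`𝒮_od(ℝ²ⁿ)` of off-diagonal Schwartz functions (with the subspace Fréchet
topology): any map realising the convolution formula is continuous. -/
theorem convolution_map_continuous_on_offDiag {n : ℕ}
    (φ : SchwartzMap (Euc n) ℝ)
    (Φ : {G : SchwartzMap (Euc n × Euc n) ℝ // IsOffDiag G} →
         {G : SchwartzMap (Euc n × Euc n) ℝ // IsOffDiag G})
    (hΦ : ∀ G, ∀ x y : Euc n,
      (Φ G).1 (x, y) = ∫ z : Euc n, φ z * G.1 (x - z, y - z)) :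
    Continuous Φ := by
  let diag : Euc n →L[ℝ] Euc n × Euc n := (ContinuousLinearMap.id ℝ _).prod (.id ℝ _)
  have hΦ_conv : Subtype.val ∘ Φ = convAlongCLM φ diag volume ∘ Subtype.val := by
    funext G
    ext ⟨x, y⟩
    exact hΦ G x y
  exact continuous_induced_rng.2
    (hΦ_conv ▸ (convAlongCLM φ diag volume).continuous.comp continuous_subtype_val)
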